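/- Let (X, Y) be a pair of random variables taking values in Z_2 × Z_2 and let Z = X ⊕ Y (addition modulo 2). Then for every R > H(Z) and every η > 0 there exists N such that for all n ≥ N there exist k ≥ 1 with k/n ≤ R, a matrix A ∈ M_{k×n}(Z_2) and a decoding map ψ : Z_2^k → Z_2^n such that, for (X^n, Y^n) consisting of n i.i.d. copies of (X, Y), the probability that ψ(A·X^n ⊕ A·Y^n) = X^n ⊕ Y^n is at least 1 − η. In particular, each encoder transmitting only its own syndrome (A·X^n, respectively A·Y^n) at rate at most R suffices for the decoder to recover the modulo-2 sum X^n ⊕ Y^n with high probability. -/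

import Mathlib

open scoped Classical

noncomputable section

/-- Base-2 Shannon entropy of a probability mass function on a finite type
(with the convention `0 · log 0 = 0`, automatic since `Real.logb 2 0 = 0`). -/
def ent {A : Type*} [Fintype A] (P : A → ℝ) : ℝ :=
  -∑ a, P a * Real.logb 2 (P a)

/-- Distribution (pushforward pmf) of a random variable `X` on a finite
probability space with weights `μ`. -/
def distOf {Ω A : Type*} [Fintype Ω] (μ : Ω → ℝ) (X : Ω → A) : A → ℝ :=
  fun a => ∑ ω, if X ω = a then μ ω else 0

/-- Entropy `H(X)` of a random variable `X` on a finite probability space. -/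
def Hent {Ω A : Type*} [Fintype Ω] [Fintype A] (μ : Ω → ℝ) (X : Ω → A) : ℝ :=
  ent (distOf μ X)

/-- Conditional entropy `H(X | Y) = H(X,Y) − H(Y)`. -/
def condEnt {Ω A B : Type*} [Fintype Ω] [Fintype A] [Fintype B]
    (μ : Ω → ℝ) (X : Ω → A) (Y : Ω → B) : ℝ :=
  Hent μ (fun ω => (X ω, Y ω)) - Hent μ Y

/-- The additive subgroup `p^i · Z_{p^r} = {p^i * x : x ∈ Z_{p^r}}` of `Z_{p^r}`. -/
def pZ (p r i : ℕ) : AddSubgroup (ZMod (p ^ r)) where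
  carrier := Set.range (fun x : ZMod (p ^ r) => (p : ZMod (p ^ r)) ^ i * x)
  add_mem' := by rintro a b ⟨x, rfl⟩ ⟨y, rfl⟩; exact ⟨x + y, by ring⟩
  zero_mem' := ⟨0, by ring⟩
  neg_mem' := by rintro a ⟨x, rfl⟩; exact ⟨-x, by ring⟩

instance {G : Type*} [AddGroup G] [Finite G] (H : AddSubgroup G) : Fintype (G ⧸ H) :=
  Fintype.ofFinite _

instance {G : Type*} [AddGroup G] [Finite G] (H : AddSubgroup G) : Fintype H :=
  Fintype.ofFinite _

/-- A sequence `x ∈ A^n` is strongly `ε`-typical for the pmf `Q` if each empirical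
frequency is within `ε` of `Q a`, and symbols of zero probability never occur. -/
def StronglyTypical {A : Type*} [Fintype A] {n : ℕ} (Q : A → ℝ)
    (x : Fin n → A) (ε : ℝ) : Prop :=
  ∀ a : A,
    |((Finset.univ.filter (fun j => x j = a)).card : ℝ) / n - Q a| ≤ ε ∧
    (Q a = 0 → (Finset.univ.filter (fun j => x j = a)).card = 0)


/-! Since `A *ᵥ x + A *ᵥ y = A *ᵥ (x + y)`, the decoder only has to recover the i.i.d. sequence
`Z^n = X^n + Y^n` from its syndrome `A *ᵥ Z^n`, i.e. this is linear source coding of `Z`.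
With `Q` the law of `Z` and `P z = ∏ j, Q (z j)`, decode a syndrome to a sequence of the typical set
`T = {z | P z ≥ 2^(-n(H(Z)+δ))}` having it. Decoding fails only if `Z^n ∉ T`, which has probability
`O(1/n)` by Chebyshev's inequality for the i.i.d. sum `log P(Z^n) = ∑ j, log Q (Z_j)`, or if
another element of `T` has the same syndrome. For `z ≠ z'` a uniformly random `A` has
`A *ᵥ z = A *ᵥ z'` with probability `2^(-k)`, so some `A` makes the second event have probability
at most `|T| 2^(-k) ≤ 2^(n(H+δ)-k)`, which is small once `k ≥ n(H+2δ)`. -/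

open Finset Matrix

lemma sum_mul_distOf {Ω A : Type*} [Fintype Ω] [Fintype A] (μ : Ω → ℝ) (X : Ω → A)
    (G : A → ℝ) : ∑ a, distOf μ X a * G a = ∑ ω, μ ω * G (X ω) := by
  simp only [distOf, sum_mul, ite_mul, zero_mul]
  rw [sum_comm]
  simp

lemma sum_distOf {Ω A : Type*} [Fintype Ω] [Fintype A] (μ : Ω → ℝ) (X : Ω → A) :
    ∑ a, distOf μ X a = ∑ ω, μ ω := by
  simpa using sum_mul_distOf μ X 1

lemma distOf_nonneg {Ω A : Type*} [Fintype Ω] {μ : Ω → ℝ} (hμ : ∀ ω, 0 ≤ μ ω) (X : Ω → A)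
    (a : A) : 0 ≤ distOf μ X a :=
  sum_nonneg fun ω _ => by split_ifs <;> simp [hμ ω]

lemma ent_nonneg {A : Type*} [Fintype A] {Q : A → ℝ} (hQ0 : ∀ a, 0 ≤ Q a)
    (hQ1 : ∑ a, Q a = 1) : 0 ≤ ent Q := by
  rw [ent, neg_nonneg]
  refine sum_nonpos fun a _ => mul_nonpos_of_nonneg_of_nonpos (hQ0 a) ?_
  exact Real.logb_nonpos one_lt_two (hQ0 a)
    (hQ1 ▸ single_le_sum (fun b _ => hQ0 b) (mem_univ a))

lemma sum_mul_logb_add_ent {A : Type*} [Fintype A] {Q : A → ℝ} (hQ1 : ∑ a, Q a = 1) :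
    ∑ a, Q a * (Real.logb 2 (Q a) + ent Q) = 0 := by
  simp only [mul_add, sum_add_distrib, ← sum_mul, hQ1, ent]
  ring

lemma sum_le_sum_mul_sq_div_sq {α : Type*} [Fintype α] {p : α → ℝ} (hp : ∀ z, 0 ≤ p z)
    (F : α → ℝ) {s : Finset α} {t : ℝ} (ht : 0 < t) (hs : ∀ z ∈ s, p z ≠ 0 → t ≤ |F z|) :
    ∑ z ∈ s, p z ≤ (∑ z, p z * F z ^ 2) / t ^ 2 := by
  rw [sum_div]
  calc ∑ z ∈ s, p z ≤ ∑ z ∈ s, p z * F z ^ 2 / t ^ 2 := by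
        refine sum_le_sum fun z hz => ?_
        rcases (hp z).eq_or_lt with h | h
        · simp [← h]
        · rw [mul_div_assoc, le_mul_iff_one_le_right h, one_le_div (by positivity),
            ← sq_abs (F z)]
          exact pow_le_pow_left₀ ht.le (hs z hz h.ne') 2
    _ ≤ ∑ z, p z * F z ^ 2 / t ^ 2 :=
        sum_le_sum_of_subset_of_nonneg (subset_univ s) fun z _ _ => by
          have := hp z
          positivity

section IID

variable {B : Type*} [Fintype B] {n : ℕ}

lemma sum_prod_mul_prod (Q : B → ℝ) (f : Fin n → B → ℝ) :
    ∑ z : Fin n → B, (∏ j, Q (z j)) * ∏ j, f j (z j) = ∏ j, ∑ b, Q b * f j b := by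
  simp_rw [← prod_mul_distrib]
  exact (Fintype.prod_sum fun j b => Q b * f j b).symm

lemma sum_prod_eq_one {Q : B → ℝ} (hQ1 : ∑ b, Q b = 1) :
    ∑ z : Fin n → B, ∏ j, Q (z j) = 1 := by
  simp [← Fintype.prod_sum, hQ1]

lemma sum_prod_mul_apply {Q : B → ℝ} (hQ1 : ∑ b, Q b = 1) (g : B → ℝ) (i : Fin n) :
    ∑ z : Fin n → B, (∏ j, Q (z j)) * g (z i) = ∑ b, Q b * g b := by
  simpa [apply_ite, hQ1] using sum_prod_mul_prod Q fun j b => if j = i then g b else 1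

lemma sum_prod_mul_apply_mul_apply {Q : B → ℝ} (hQ1 : ∑ b, Q b = 1) (g : B → ℝ)
    {i i' : Fin n} (hi : i ≠ i') :
    ∑ z : Fin n → B, (∏ j, Q (z j)) * (g (z i) * g (z i')) = (∑ b, Q b * g b) ^ 2 := by
  set m := ∑ b, Q b * g b
  calc _ = ∏ j, ∑ b, Q b * ((if j = i then g b else 1) * (if j = i' then g b else 1)) := by
        simp only [← sum_prod_mul_prod, prod_mul_distrib, prod_ite_eq', mem_univ, if_true]
    _ = ∏ j, (if j = i then m else 1) * (if j = i' then m else 1) := by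
        refine prod_congr rfl fun j _ => ?_
        by_cases hj : j = i <;> by_cases hj' : j = i' <;> simp_all [m]
    _ = m ^ 2 := by
        rw [prod_mul_distrib]
        simp [sq]

lemma sum_prod_mul_sum_sq {Q : B → ℝ} (hQ1 : ∑ b, Q b = 1) {g : B → ℝ}
    (hg : ∑ b, Q b * g b = 0) :
    ∑ z : Fin n → B, (∏ j, Q (z j)) * (∑ j, g (z j)) ^ 2 = n * ∑ b, Q b * g b ^ 2 := by
  calc _ = ∑ i, ∑ i', ∑ z : Fin n → B, (∏ j, Q (z j)) * (g (z i) * g (z i')) := by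
        simp_rw [sq, sum_mul_sum, mul_sum]
        rw [sum_comm]
        exact sum_congr rfl fun i _ => sum_comm
    _ = ∑ i : Fin n, ∑ i' : Fin n, if i = i' then ∑ b, Q b * g b ^ 2 else 0 := by
        refine sum_congr rfl fun i _ => sum_congr rfl fun i' _ => ?_
        split_ifs with hi
        · subst hi
          simp only [← sq]
          exact sum_prod_mul_apply hQ1 (fun b => g b ^ 2) i
        · rw [sum_prod_mul_apply_mul_apply hQ1 g hi, hg, sq, mul_zero]
    _ = n * ∑ b, Q b * g b ^ 2 := by simp

theorem sum_prod_lt_rpow_le {Q : B → ℝ} (hQ0 : ∀ b, 0 ≤ Q b) (hQ1 : ∑ b, Q b = 1)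
    {δ : ℝ} (hδ : 0 < δ) (hn : n ≠ 0) :
    ∑ z ∈ univ.filter (fun z : Fin n → B => ∏ j, Q (z j) < 2 ^ (-(n * (ent Q + δ)))),
        ∏ j, Q (z j)
      ≤ (∑ b, Q b * (Real.logb 2 (Q b) + ent Q) ^ 2) / (n * δ ^ 2) := by
  set g : B → ℝ := fun b => Real.logb 2 (Q b) + ent Q
  calc _ ≤ (∑ z : Fin n → B, (∏ j, Q (z j)) * (∑ j, g (z j)) ^ 2) / (n * δ) ^ 2 := by
        refine sum_le_sum_mul_sq_div_sq (fun z => prod_nonneg fun j _ => hQ0 _) _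
          (by positivity) fun z hz hz0 => ?_
        have hpos : 0 < ∏ j, Q (z j) := (prod_nonneg fun j _ => hQ0 _).lt_of_ne' hz0
        have hlog := (Real.logb_lt_iff_lt_rpow one_lt_two hpos).2 (mem_filter.1 hz).2
        rw [Real.logb_prod _ _ fun j _ => prod_ne_zero_iff.1 hz0 j (mem_univ j)] at hlog
        have hsum : ∑ j, g (z j) = ∑ j, Real.logb 2 (Q (z j)) + n * ent Q := by
          simp [g, sum_add_distrib]
        rw [le_abs]
        right
        linarith
    _ = _ := by
        rw [sum_prod_mul_sum_sq hQ1 (sum_mul_logb_add_ent hQ1)]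
        field_simp

end IID

lemma prod_distOf {A B : Type*} [Fintype A] {n : ℕ} (P : A → ℝ) (s : A → B) (z : Fin n → B) :
    ∏ j, distOf P s (z j) =
      distOf (fun x : Fin n → A => ∏ j, P (x j)) (fun x j => s (x j)) z := by
  simp only [distOf, Fintype.prod_sum, Fintype.prod_ite_zero, funext_iff]
  congr!

lemma sum_prod_mul_comp {A B : Type*} [Fintype A] [Fintype B] {n : ℕ} (P : A → ℝ) (s : A → B)
    (G : (Fin n → B) → ℝ) :
    ∑ x : Fin n → A, (∏ j, P (x j)) * G (fun j => s (x j)) =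
      ∑ z : Fin n → B, (∏ j, distOf P s (z j)) * G z := by
  simp only [prod_distOf, sum_mul_distOf]

section SyndromeCoding

variable {F : Type*} [Field F] {ι κ : Type*} [Fintype ι]

def syndromeDecoder (A : Matrix κ ι F) (T : Finset (ι → F)) (s : κ → F) : ι → F :=
  if h : ∃ z ∈ T, A *ᵥ z = s then h.choose else 0

lemma syndromeDecoder_mulVec {A : Matrix κ ι F} {T : Finset (ι → F)} {z : ι → F} (hz : z ∈ T)
    (hA : ¬∃ z' ∈ T, z' ≠ z ∧ A *ᵥ z' = A *ᵥ z) : syndromeDecoder A T (A *ᵥ z) = z := by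
  have h : ∃ z' ∈ T, A *ᵥ z' = A *ᵥ z := ⟨z, hz, rfl⟩
  rw [syndromeDecoder, dif_pos h]
  by_contra hne
  exact hA ⟨h.choose, h.choose_spec.1, hne, h.choose_spec.2⟩

variable [DecidableEq ι]

lemma mulVec_left_surjective {v : ι → F} (hv : v ≠ 0) :
    Function.Surjective fun A : Matrix κ ι F => A *ᵥ v := by
  obtain ⟨j, hj⟩ := Function.ne_iff.1 hv
  intro w
  refine ⟨vecMulVec w (Pi.single j (v j)⁻¹), ?_⟩
  simp [vecMulVec_mulVec, single_dotProduct, inv_mul_cancel₀ hj]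

variable [Fintype F] [DecidableEq F] [Fintype κ]

lemma card_filter_mulVec_eq_zero_mul {v : ι → F} (hv : v ≠ 0) :
    #{A : Matrix κ ι F | A *ᵥ v = 0} * Fintype.card F ^ Fintype.card κ =
      Fintype.card (Matrix κ ι F) := by
  let φ := mulVec.addMonoidHomLeft (m := κ) v
  have hcard := AddSubgroup.card_eq_card_quotient_mul_card_addSubgroup φ.ker
  rw [Nat.card_congr (QuotientAddGroup.quotientKerEquivOfSurjective φ
    (mulVec_left_surjective hv)).toEquiv] at hcard
  have hker : Nat.card φ.ker = #{A : Matrix κ ι F | A *ᵥ v = 0} := by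
    rw [← Fintype.card_subtype, ← Nat.card_eq_fintype_card]
    rfl
  rw [hker, Nat.card_eq_fintype_card, Nat.card_eq_fintype_card] at hcard
  rw [hcard, mul_comm, Fintype.card_fun]

lemma card_filter_exists_mulVec_eq_mul_le (T : Finset (ι → F)) (z : ι → F) :
    #{A : Matrix κ ι F | ∃ z' ∈ T, z' ≠ z ∧ A *ᵥ z' = A *ᵥ z} * Fintype.card F ^ Fintype.card κ
      ≤ #T * Fintype.card (Matrix κ ι F) := by
  have hsub : ({A : Matrix κ ι F | ∃ z' ∈ T, z' ≠ z ∧ A *ᵥ z' = A *ᵥ z} : Finset _) ⊆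
      (T.erase z).biUnion fun z' => {A : Matrix κ ι F | A *ᵥ (z' - z) = 0} := by
    intro A hA
    obtain ⟨z', hz', hne, heq⟩ := (mem_filter.1 hA).2
    simp only [mem_biUnion, mem_erase, mem_filter, mem_univ, true_and]
    exact ⟨z', ⟨hne, hz'⟩, by rw [mulVec_sub, heq, sub_self]⟩
  calc _ ≤ ∑ z' ∈ T.erase z,
          #{A : Matrix κ ι F | A *ᵥ (z' - z) = 0} * Fintype.card F ^ Fintype.card κ := by
        rw [← sum_mul]
        exact Nat.mul_le_mul_right _ ((card_le_card hsub).trans card_biUnion_le)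
    _ = #(T.erase z) * Fintype.card (Matrix κ ι F) := by
        rw [sum_congr rfl fun z' hz' => card_filter_mulVec_eq_zero_mul
          (sub_ne_zero_of_ne (mem_erase.1 hz').1), sum_const, smul_eq_mul]
    _ ≤ #T * Fintype.card (Matrix κ ι F) := Nat.mul_le_mul_right _ card_erase_le

lemma exists_sum_mul_collision_le {p : (ι → F) → ℝ} (hp : ∀ z, 0 ≤ p z) (T : Finset (ι → F)) :
    ∃ A : Matrix κ ι F, ∑ z ∈ T, p z * (if ∃ z' ∈ T, z' ≠ z ∧ A *ᵥ z' = A *ᵥ z then 1 else 0)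
      ≤ (∑ z ∈ T, p z) * (#T / Fintype.card F ^ Fintype.card κ) := by
  have hq : (0 : ℝ) < Fintype.card F ^ Fintype.card κ := by
    have := Fintype.card_pos (α := F)
    positivity
  have hcoll (z : ι → F) : (#{A : Matrix κ ι F | ∃ z' ∈ T, z' ≠ z ∧ A *ᵥ z' = A *ᵥ z} : ℝ) ≤
      #T * Fintype.card (Matrix κ ι F) / Fintype.card F ^ Fintype.card κ := by
    rw [le_div_iff₀ hq]
    exact_mod_cast card_filter_exists_mulVec_eq_mul_le T z
  suffices h : ∑ A : Matrix κ ι F, ∑ z ∈ T,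
      p z * (if ∃ z' ∈ T, z' ≠ z ∧ A *ᵥ z' = A *ᵥ z then 1 else 0) ≤
      ∑ _A : Matrix κ ι F, (∑ z ∈ T, p z) * (#T / Fintype.card F ^ Fintype.card κ) by
    obtain ⟨A, -, hA⟩ := exists_le_of_sum_le univ_nonempty h
    exact ⟨A, hA⟩
  calc _ = ∑ z ∈ T, p z * #{A : Matrix κ ι F | ∃ z' ∈ T, z' ≠ z ∧ A *ᵥ z' = A *ᵥ z} := by
        rw [sum_comm]
        simp only [← mul_sum, sum_boole]
    _ ≤ ∑ z ∈ T, p z * (#T * Fintype.card (Matrix κ ι F) / Fintype.card F ^ Fintype.card κ) :=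
        sum_le_sum fun z _ => mul_le_mul_of_nonneg_left (hcoll z) (hp z)
    _ = _ := by
        rw [sum_const, card_univ, nsmul_eq_mul, ← sum_mul]
        ring

theorem exists_mulVec_decoder {p : (ι → F) → ℝ} (hp0 : ∀ z, 0 ≤ p z) (hp1 : ∑ z, p z = 1)
    (T : Finset (ι → F)) :
    ∃ (A : Matrix κ ι F) (ψ : (κ → F) → ι → F),
      1 - ∑ z ∈ Tᶜ, p z - #T / Fintype.card F ^ Fintype.card κ ≤
        ∑ z, p z * if ψ (A *ᵥ z) = z then 1 else 0 := by
  obtain ⟨A, hA⟩ := exists_sum_mul_collision_le (κ := κ) hp0 T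
  refine ⟨A, syndromeDecoder A T, ?_⟩
  have hT : ∑ z ∈ T, p z ≤ 1 :=
    hp1 ▸ sum_le_sum_of_subset_of_nonneg (subset_univ T) fun z _ _ => hp0 z
  have hsplit : 1 - ∑ z ∈ Tᶜ, p z = ∑ z ∈ T, p z := by
    rw [← hp1, ← sum_add_sum_compl T, add_sub_cancel_right]
  have hcoll := hA.trans (mul_le_of_le_one_left (by positivity) hT)
  calc 1 - ∑ z ∈ Tᶜ, p z - #T / Fintype.card F ^ Fintype.card κ
      ≤ ∑ z ∈ T, p z - ∑ z ∈ T,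
          p z * (if ∃ z' ∈ T, z' ≠ z ∧ A *ᵥ z' = A *ᵥ z then 1 else 0) := by
        linarith
    _ ≤ ∑ z ∈ T, p z * if syndromeDecoder A T (A *ᵥ z) = z then 1 else 0 := by
        rw [← sum_sub_distrib]
        refine sum_le_sum fun z hz => ?_
        by_cases h : ∃ z' ∈ T, z' ≠ z ∧ A *ᵥ z' = A *ᵥ z
        · rw [if_pos h]
          split_ifs <;> linarith [hp0 z]
        · simp [syndromeDecoder_mulVec hz h, h]
    _ ≤ ∑ z, p z * if syndromeDecoder A T (A *ᵥ z) = z then 1 else 0 :=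
        sum_le_sum_of_subset_of_nonneg (subset_univ T) fun z _ _ =>
          mul_nonneg (hp0 z) (by split_ifs <;> norm_num)

end SyndromeCoding

theorem exists_linear_code_error_le {Q : ZMod 2 → ℝ} (hQ0 : ∀ b, 0 ≤ Q b) (hQ1 : ∑ b, Q b = 1)
    {n k : ℕ} (hn : n ≠ 0) {δ : ℝ} (hδ : 0 < δ) (hk : n * (ent Q + 2 * δ) ≤ k) :
    ∃ (A : Matrix (Fin k) (Fin n) (ZMod 2)) (ψ : (Fin k → ZMod 2) → Fin n → ZMod 2),
      1 - (∑ b, Q b * (Real.logb 2 (Q b) + ent Q) ^ 2) / (n * δ ^ 2) - 2 ^ (-(n * δ)) ≤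
        ∑ z : Fin n → ZMod 2, (∏ j, Q (z j)) * if ψ (A *ᵥ z) = z then 1 else 0 := by
  set T := univ.filter fun z : Fin n → ZMod 2 => 2 ^ (-(n * (ent Q + δ))) ≤ ∏ j, Q (z j)
  obtain ⟨A, ψ, h⟩ := exists_mulVec_decoder (κ := Fin k) (p := fun z => ∏ j, Q (z j))
    (fun z => prod_nonneg fun j _ => hQ0 (z j)) (sum_prod_eq_one hQ1) T
  refine ⟨A, ψ, ?_⟩
  have hTc : ∑ z ∈ Tᶜ, ∏ j, Q (z j) ≤
      (∑ b, Q b * (Real.logb 2 (Q b) + ent Q) ^ 2) / (n * δ ^ 2) := by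
    simpa only [T, compl_filter, not_le] using sum_prod_lt_rpow_le hQ0 hQ1 hδ hn
  have hTcard : (#T : ℝ) * 2 ^ (-(n * (ent Q + δ))) ≤ 1 := by
    rw [← nsmul_eq_mul, ← sum_prod_eq_one hQ1 (n := n)]
    exact (card_nsmul_le_sum T _ _ fun z hz => (mem_filter.1 hz).2).trans
      (sum_le_sum_of_subset_of_nonneg (subset_univ T) fun z _ _ => prod_nonneg fun j _ => hQ0 _)
  have hTle : (#T : ℝ) ≤ 2 ^ (n * (ent Q + δ)) := by
    rwa [Real.rpow_neg two_pos.le, ← div_eq_mul_inv, div_le_one (by positivity)] at hTcard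
  have hk' : (2 : ℝ) ^ (n * (ent Q + 2 * δ)) ≤ 2 ^ k := by
    rw [← Real.rpow_natCast]
    exact Real.rpow_le_rpow_of_exponent_le one_le_two hk
  have hT : (#T : ℝ) / 2 ^ k ≤ 2 ^ (-(n * δ)) :=
    calc (#T : ℝ) / 2 ^ k ≤ 2 ^ (n * (ent Q + δ)) / 2 ^ (n * (ent Q + 2 * δ)) :=
          div_le_div₀ (by positivity) hTle (by positivity) hk'
      _ = 2 ^ (-(n * δ)) := by
          rw [← Real.rpow_sub two_pos]
          ring_nf
  simp only [ZMod.card, Fintype.card_fin, Nat.cast_ofNat] at h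
  linarith

theorem exists_linear_source_code {Q : ZMod 2 → ℝ} (hQ0 : ∀ b, 0 ≤ Q b) (hQ1 : ∑ b, Q b = 1)
    {R : ℝ} (hR : ent Q < R) {η : ℝ} (hη : 0 < η) :
    ∃ N : ℕ, ∀ n ≥ N, ∃ k : ℕ, 1 ≤ k ∧ (k : ℝ) / n ≤ R ∧
      ∃ (A : Matrix (Fin k) (Fin n) (ZMod 2)) (ψ : (Fin k → ZMod 2) → Fin n → ZMod 2),
        1 - η ≤ ∑ z : Fin n → ZMod 2, (∏ j, Q (z j)) * if ψ (A *ᵥ z) = z then 1 else 0 := by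
  set δ := (R - ent Q) / 3
  set V := ∑ b, Q b * (Real.logb 2 (Q b) + ent Q) ^ 2
  have hδ : 0 < δ := by simp only [δ]; linarith
  have hlarge : ∀ᶠ n : ℕ in Filter.atTop,
      1 ≤ n * δ ∧ -Real.logb 2 (η / 2) ≤ n * δ ∧ V / (n * δ ^ 2) < η / 2 := by
    have hnδ := tendsto_natCast_atTop_atTop.atTop_mul_const hδ
    refine (hnδ.eventually_ge_atTop 1).and ((hnδ.eventually_ge_atTop _).and ?_)
    filter_upwards [(tendsto_const_div_atTop_nhds_zero_nat (V / δ ^ 2)).eventually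
      (gt_mem_nhds (half_pos hη))] with n hn
    rwa [div_div, mul_comm] at hn
  obtain ⟨N, hN⟩ := Filter.eventually_atTop.1 hlarge
  refine ⟨N, fun n hn => ?_⟩
  obtain ⟨h1, hlog, hV⟩ := hN n hn
  have hn0 : n ≠ 0 := by
    rintro rfl
    simp at h1
    linarith
  have hH := ent_nonneg hQ0 hQ1
  obtain ⟨A, ψ, hA⟩ := exists_linear_code_error_le hQ0 hQ1 hn0 hδ
    (Nat.le_ceil (n * (ent Q + 2 * δ)))
  refine ⟨⌈n * (ent Q + 2 * δ)⌉₊, Nat.one_le_iff_ne_zero.2 ?_, ?_, A, ψ, hA.trans' ?_⟩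
  · exact (Nat.ceil_pos.2 (by positivity)).ne'
  · rw [div_le_iff₀ (by positivity)]
    have hceil := Nat.ceil_lt_add_one (by positivity : (0 : ℝ) ≤ n * (ent Q + 2 * δ))
    have hnR : R * n = n * (ent Q + 2 * δ) + n * δ := by simp only [δ]; ring
    linarith
  · have h2 : (2 : ℝ) ^ (-(n * δ)) ≤ η / 2 :=
      calc (2 : ℝ) ^ (-(n * δ)) ≤ 2 ^ Real.logb 2 (η / 2) :=
            Real.rpow_le_rpow_of_exponent_le one_le_two (by linarith)
        _ = η / 2 := Real.rpow_logb two_pos (by norm_num) (half_pos hη)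
    linarith

theorem stmt18
    (PXY : ZMod 2 × ZMod 2 → ℝ) (h0 : ∀ xy, 0 ≤ PXY xy) (h1 : ∑ xy, PXY xy = 1) :
    ∀ R : ℝ, Hent PXY (fun xy => xy.1 + xy.2) < R →
    ∀ η > (0 : ℝ), ∃ N : ℕ, ∀ n ≥ N,
      ∃ k : ℕ, 1 ≤ k ∧ (k : ℝ) / (n : ℝ) ≤ R ∧
        ∃ (A : Matrix (Fin k) (Fin n) (ZMod 2))
          (ψ : (Fin k → ZMod 2) → (Fin n → ZMod 2)),
          (1 : ℝ) - η ≤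
            ∑ xy : Fin n → ZMod 2 × ZMod 2,
              (∏ j, PXY (xy j)) *
                (if ψ (A.mulVec (fun j => (xy j).1) + A.mulVec (fun j => (xy j).2))
                    = (fun j => (xy j).1 + (xy j).2) then (1 : ℝ) else 0) := by
  intro R hR η hη
  obtain ⟨N, hN⟩ := exists_linear_source_code (distOf_nonneg h0 _)
    ((sum_distOf PXY _).trans h1) hR hη
  refine ⟨N, fun n hn => ?_⟩
  obtain ⟨k, hk1, hkR, A, ψ, hA⟩ := hN n hn
  refine ⟨k, hk1, hkR, A, ψ, hA.trans_eq ?_⟩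
  simp_rw [← mulVec_add]
  exact (sum_prod_mul_comp PXY _ fun z => if ψ (A *ᵥ z) = z then 1 else 0).symm

end
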